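/- arXiv:1702.00140 — 2 statements merged into one kernel-verified Lean document; each statement's English description precedes it below -/
import Mathlib

section
/- For any n ∈ ℕ, any q > 0 and any s, t, i ∈ {1,…,n}, setting d = |s−t|, one has min(q^d, q^{−d}) ≤ μ_{n,q}(π(s)=i) / μ_{n,q}(π(t)=i) ≤ max(q^d, q^{−d}). -/
open Filter Finset MeasureTheory

/-- Number of inversions of a permutation of `Fin n`. -/
def inversions (n : ℕ) (π : Equiv.Perm (Fin n)) : ℕ :=
  (Finset.univ.filter (fun p : Fin n × Fin n => p.1 < p.2 ∧ π p.2 < π p.1)).card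

/-- The `(n,q)`-Mallows probability mass function on `S_n`. -/
noncomputable def mallowsPMF (n : ℕ) (q : ℝ) (π : Equiv.Perm (Fin n)) : ℝ :=
  q ^ inversions n π / ∑ σ : Equiv.Perm (Fin n), q ^ inversions n σ

open Classical in
/-- The `(n,q)`-Mallows probability of an event `P` of permutations. -/
noncomputable def mallowsProb (n : ℕ) (q : ℝ) (P : Equiv.Perm (Fin n) → Prop) : ℝ :=
  ∑ π : Equiv.Perm (Fin n), if P π then mallowsPMF n q π else 0

/-- Expectation with respect to the `(n,q)`-Mallows measure. -/
noncomputable def mallowsExp (n : ℕ) (q : ℝ) (f : Equiv.Perm (Fin n) → ℝ) : ℝ :=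
  ∑ π : Equiv.Perm (Fin n), mallowsPMF n q π * f π

/-- Action of a permutation of `Fin n` on one-based indices `{1,…,n}`. -/
def permAct (n : ℕ) (π : Equiv.Perm (Fin n)) (i : ℕ) : ℕ :=
  if h : 1 ≤ i ∧ i ≤ n then ((π ⟨i - 1, by omega⟩ : Fin n) : ℕ) + 1 else i

/-- The limiting density `u(x,y,β)` from Starr's theorem. -/
noncomputable def mallowsU (x y β : ℝ) : ℝ :=
  if β = 0 then 1
  else (β / 2) * Real.sinh (β / 2) /
    (Real.exp (β / 4) * Real.cosh (β * (x - y) / 2)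
      - Real.exp (-β / 4) * Real.cosh (β * (x + y - 1) / 2)) ^ 2

/-! Right multiplication by an adjacent transposition `τ = (a b)`, `a ⋖ b`, changes the inversion
count by one, since `(x, y) ↦ (τ x, τ y)` preserves `x < y` on every pair except `(a, b)`;
so it changes the Mallows weight by a factor between `min q q⁻¹` and `max q q⁻¹`.
Since `π ↦ π * (a b)` carries `{π b = v}` onto `{π a = v}`, the probabilities of `π a = v` and
`π b = v` are within a factor `min q q⁻¹` of each other; chaining `d = |s - t|` such steps
gives the bound. -/

section

variable {n : ℕ} {q : ℝ}

theorem Equiv.swap_apply_lt_swap_apply_of_covBy {α : Type*} [LinearOrder α] {a b x y : α}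
    (hab : a ⋖ b) (hxy : x < y) (hne : (x, y) ≠ (a, b)) : swap a b x < swap a b y := by
  have hlt := hab.1
  have hnot_between : ∀ ⦃c⦄, a < c → ¬c < b := hab.2
  rw [ne_eq, Prod.mk.injEq] at hne
  simp only [Equiv.swap_apply_def]
  split_ifs <;> grind

theorem inversions_mul_swap_le {a b : Fin n} (hab : a ⋖ b) (π : Equiv.Perm (Fin n)) :
    inversions n (π * Equiv.swap a b) ≤ inversions n π + 1 := by
  set τ := Equiv.swap a b
  set S := univ.filter fun p : Fin n × Fin n => p.1 < p.2 ∧ π p.2 < π p.1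
  set S' := univ.filter fun p : Fin n × Fin n => p.1 < p.2 ∧ (π * τ) p.2 < (π * τ) p.1
  have hmaps : Set.MapsTo (Prod.map τ τ) (S'.erase (a, b) : Set _) S := by
    rintro ⟨x, y⟩ hp
    simp only [coe_erase, Set.mem_sdiff, mem_coe, S', mem_filter, mem_univ, true_and,
      Set.mem_singleton_iff] at hp
    obtain ⟨⟨hxy, hinv⟩, hne⟩ := hp
    exact mem_filter.2 ⟨mem_univ _, Equiv.swap_apply_lt_swap_apply_of_covBy hab hxy hne, hinv⟩
  have hinj : Set.InjOn (Prod.map τ τ) (S'.erase (a, b) : Set _) :=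
    (τ.injective.prodMap τ.injective).injOn
  calc inversions n (π * τ) = #S' := rfl
    _ ≤ #(S'.erase (a, b)) + 1 := Nat.sub_le_iff_le_add.1 pred_card_le_card_erase
    _ ≤ #S + 1 := Nat.add_le_add_right (card_le_card_of_injOn _ hmaps hinj) 1

theorem min_inv_mul_pow_le_pow (hq : 0 < q) {l l' : ℕ} (h₁ : l ≤ l' + 1)
    (h₂ : l' ≤ l + 1) : min q q⁻¹ * q ^ l ≤ q ^ l' := by
  have hpow : 0 ≤ q ^ l' := by positivity
  have hmin_mul : min q q⁻¹ * q ≤ 1 :=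
    (mul_le_mul_of_nonneg_right (min_le_right _ _) hq.le).trans (inv_mul_cancel₀ hq.ne').le
  obtain rfl | rfl | rfl : l' = l + 1 ∨ l' = l ∨ l = l' + 1 := by omega
  · rw [pow_succ']
    exact mul_le_mul_of_nonneg_right (min_le_left _ _) (pow_nonneg hq.le _)
  · have hmin_le_one : min q q⁻¹ ≤ 1 := by
      rcases le_total q 1 with h | h
      · exact (min_le_left _ _).trans h
      · exact (min_le_right _ _).trans (inv_le_one_of_one_le₀ h)
    exact mul_le_of_le_one_left hpow hmin_le_one
  · rw [pow_succ', ← mul_assoc]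
    exact mul_le_of_le_one_left hpow hmin_mul

theorem mallowsPMF_pos (hq : 0 < q) (π : Equiv.Perm (Fin n)) : 0 < mallowsPMF n q π :=
  div_pos (pow_pos hq _) (sum_pos (fun _ _ => pow_pos hq _) univ_nonempty)

theorem min_inv_mul_mallowsPMF_le_mul_swap (hq : 0 < q) {a b : Fin n} (hab : a ⋖ b)
    (π : Equiv.Perm (Fin n)) :
    min q q⁻¹ * mallowsPMF n q π ≤ mallowsPMF n q (π * Equiv.swap a b) := by
  have hback := inversions_mul_swap_le hab (π * Equiv.swap a b)
  rw [mul_assoc, Equiv.swap_mul_self, mul_one] at hback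
  rw [mallowsPMF, mallowsPMF, ← mul_div_assoc]
  gcongr
  exact min_inv_mul_pow_le_pow hq hback (inversions_mul_swap_le hab π)

theorem mallowsProb_pos (hq : 0 < q) {P : Equiv.Perm (Fin n) → Prop} (h : ∃ π, P π) :
    0 < mallowsProb n q P := by
  obtain ⟨π, hπ⟩ := h
  refine sum_pos' (fun σ _ => ?_) ⟨π, mem_univ _, by simp [hπ, mallowsPMF_pos hq]⟩
  split_ifs
  exacts [(mallowsPMF_pos hq σ).le, le_rfl]

open Classical in
theorem min_inv_mul_mallowsProb_le (hq : 0 < q) {a b : Fin n} (hab : a ⋖ b)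
    (P : Equiv.Perm (Fin n) → Prop) :
    min q q⁻¹ * mallowsProb n q (fun π => P (π * Equiv.swap a b)) ≤ mallowsProb n q P := by
  rw [mallowsProb, mallowsProb, mul_sum, ← Equiv.sum_comp (Equiv.mulRight (Equiv.swap a b))
    (fun π => if P π then mallowsPMF n q π else 0)]
  refine sum_le_sum fun π _ => ?_
  by_cases h : P (π * Equiv.swap a b)
  · simpa [h] using min_inv_mul_mallowsPMF_le_mul_swap hq hab π
  · simp [h]

theorem min_inv_mul_mallowsProb_apply_eq_le (hq : 0 < q) {a b : Fin n} (hab : a ⋖ b)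
    (v : Fin n) :
    min q q⁻¹ * mallowsProb n q (fun π => π a = v) ≤ mallowsProb n q (fun π => π b = v) ∧
    min q q⁻¹ * mallowsProb n q (fun π => π b = v) ≤ mallowsProb n q (fun π => π a = v) := by
  constructor
  · simpa using min_inv_mul_mallowsProb_le hq hab (fun π => π b = v)
  · simpa using min_inv_mul_mallowsProb_le hq hab (fun π => π a = v)

theorem Fin.covBy_of_val_add_one {a b : Fin n} (h : (a : ℕ) + 1 = b) : a ⋖ b :=
  ⟨Fin.lt_def.2 (by omega), fun {c} hac hcb => by rw [Fin.lt_def] at hac hcb; omega⟩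

theorem Fin.pow_mul_le_of_forall_covBy {f : Fin n → ℝ} {c : ℝ} (hc : 0 ≤ c)
    (hstep : ∀ a b : Fin n, a ⋖ b → c * f a ≤ f b ∧ c * f b ≤ f a) (d : ℕ) :
    ∀ a b : Fin n, (a : ℕ) + d = b ∨ (b : ℕ) + d = a → c ^ d * f a ≤ f b := by
  induction d with
  | zero =>
    intro a b hab
    rw [pow_zero, one_mul, Fin.ext (by omega : (a : ℕ) = b)]
  | succ d ih =>
    intro a b hab
    obtain ⟨a', ha', hdist⟩ : ∃ a' : Fin n, c * f a ≤ f a' ∧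
        ((a' : ℕ) + d = b ∨ (b : ℕ) + d = a') := by
      rcases hab with hab | hab
      · exact ⟨⟨a + 1, by omega⟩, (hstep _ _ (Fin.covBy_of_val_add_one rfl)).1,
          by dsimp only; omega⟩
      · exact ⟨⟨a - 1, by omega⟩, (hstep _ _ (Fin.covBy_of_val_add_one (by dsimp only; omega))).2,
          by dsimp only; omega⟩
    calc c ^ (d + 1) * f a = c ^ d * (c * f a) := by ring
      _ ≤ c ^ d * f a' := mul_le_mul_of_nonneg_left ha' (pow_nonneg hc d)
      _ ≤ f b := ih a' b hdist

theorem min_pow_inv_pow (hq : 0 < q) (d : ℕ) :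
    min (q ^ d) (q⁻¹ ^ d) = min q q⁻¹ ^ d := by
  rcases le_total q q⁻¹ with h | h
  · rw [min_eq_left h, min_eq_left (pow_le_pow_left₀ hq.le h d)]
  · rw [min_eq_right h, min_eq_right (pow_le_pow_left₀ (inv_pos.2 hq).le h d)]

theorem max_pow_inv_pow (hq : 0 < q) (d : ℕ) :
    max (q ^ d) (q⁻¹ ^ d) = (min q q⁻¹ ^ d)⁻¹ := by
  rcases le_total q q⁻¹ with h | h
  · rw [max_eq_right (pow_le_pow_left₀ hq.le h d), min_eq_left h, inv_pow]
  · rw [max_eq_left (pow_le_pow_left₀ (inv_pos.2 hq).le h d), min_eq_right h, inv_pow, inv_inv]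

theorem permAct_eq_iff (π : Equiv.Perm (Fin n)) {s i : ℕ} (hs : 1 ≤ s ∧ s ≤ n)
    (hi : 1 ≤ i ∧ i ≤ n) :
    permAct n π s = i ↔ π ⟨s - 1, by omega⟩ = ⟨i - 1, by omega⟩ := by
  rw [permAct, dif_pos hs, Fin.ext_iff]
  dsimp only
  omega

theorem le_div_and_div_le_inv {x y c : ℝ} (hc : 0 < c) (hy : 0 < y) (hyx : c * y ≤ x)
    (hxy : c * x ≤ y) : c ≤ x / y ∧ x / y ≤ c⁻¹ :=
  ⟨(le_div_iff₀ hy).2 hyx, (div_le_iff₀ hy).2 ((le_inv_mul_iff₀ hc).2 hxy)⟩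

end

/-- **Lemma 5.4.** For any `s, t, i ∈ {1,…,n}` and `q > 0`, with `d = |s − t|`,
`min(q^d, q^{−d}) ≤ μ_{n,q}(π(s)=i) / μ_{n,q}(π(t)=i) ≤ max(q^d, q^{−d})`. -/
theorem mallows_index_ratio_bound (n : ℕ) (q : ℝ) (hq : 0 < q)
    (s t i : ℕ) (hs : 1 ≤ s ∧ s ≤ n) (ht : 1 ≤ t ∧ t ≤ n) (hi : 1 ≤ i ∧ i ≤ n) :
    min (q ^ (max s t - min s t)) (q⁻¹ ^ (max s t - min s t))
        ≤ mallowsProb n q (fun π => permAct n π s = i)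
            / mallowsProb n q (fun π => permAct n π t = i) ∧
      mallowsProb n q (fun π => permAct n π s = i)
          / mallowsProb n q (fun π => permAct n π t = i)
        ≤ max (q ^ (max s t - min s t)) (q⁻¹ ^ (max s t - min s t)) := by
  simp only [permAct_eq_iff _ hs hi, permAct_eq_iff _ ht hi, min_pow_inv_pow hq,
    max_pow_inv_pow hq]
  have hc : 0 < min q q⁻¹ := lt_min hq (inv_pos.2 hq)
  have hchain := Fin.pow_mul_le_of_forall_covBy
    (f := fun a => mallowsProb n q (fun π => π a = ⟨i - 1, by omega⟩)) hc.le
    (fun a b hab => min_inv_mul_mallowsProb_apply_eq_le hq hab _) (max s t - min s t)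
  exact le_div_and_div_le_inv (pow_pos hc _)
    (mallowsProb_pos hq ⟨Equiv.swap _ _, Equiv.swap_apply_left _ _⟩)
    (hchain _ _ (by dsimp only; omega)) (hchain _ _ (by dsimp only; omega))
end

section
/- For any n ∈ ℕ, q > 0, any subset A ⊆ [0,1] and any s, t ∈ {1,…,n}, one has | E_{μ_{n,q}}[ 1_A(π(s)/n) ] − E_{μ_{n,q}}[ 1_A(π(t)/n) ] | ≤ M, where M = max(|1−q^d|, |1−q^{−d}|) and d = |s−t|. -/
open Filter Finset MeasureTheory

/-!
Multiplying `π` on the right by the adjacent transposition `(k k+1)` of positions changes the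
number of inversions by exactly one, so it changes the Mallows weight by a factor `q` or `q⁻¹`.
This swap exchanges `π(k)` and `π(k+1)`, hence moving the observed position one step changes the
probability of any event about `π(k)` by at most `Q - 1`, where `Q = max q q⁻¹`. Telescoping over
`d = |s - t|` steps and Bernoulli's inequality `d (Q - 1) ≤ Q ^ d - 1` give the bound, since
`Q ^ d - 1 = max |1 - q ^ d| |1 - q⁻¹ ^ d|`.
-/

section

open Equiv

lemma swap_lt_swap_iff_of_val_add_one_eq {n : ℕ} {a b : Fin n} (hab : (a : ℕ) + 1 = b)
    {i j : Fin n} (hij : ¬(i = a ∧ j = b)) (hji : ¬(i = b ∧ j = a)) :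
    swap a b i < swap a b j ↔ i < j := by
  simp only [Fin.ext_iff, not_and] at hij hji
  simp only [swap_apply_def, Fin.lt_def]
  split_ifs <;> simp only [Fin.ext_iff] at * <;> omega

lemma inversions_mul_swap_of_lt {n : ℕ} (π : Perm (Fin n)) {a b : Fin n}
    (hab : (a : ℕ) + 1 = b) (hlt : π a < π b) :
    inversions n (π * swap a b) = inversions n π + 1 := by
  have hreindex : inversions n (π * swap a b)
      = #{p : Fin n × Fin n | swap a b p.1 < swap a b p.2 ∧ π p.2 < π p.1} := by
    refine card_equiv ((swap a b).prodCongr (swap a b)) fun p => ?_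
    rw [Finset.mem_filter, Finset.mem_filter]
    simp [Perm.mul_apply]
  have hab_lt : a < b := Fin.lt_def.2 (by omega)
  -- The inversions of `π * swap a b`, moved back by `swap a b`, are those of `π` and `(b, a)`.
  have hinsert : univ.filter (fun p : Fin n × Fin n => swap a b p.1 < swap a b p.2 ∧ π p.2 < π p.1)
      = insert (b, a) (univ.filter fun p : Fin n × Fin n => p.1 < p.2 ∧ π p.2 < π p.1) := by
    ext ⟨i, j⟩
    by_cases hij : i = a ∧ j = b
    · obtain ⟨rfl, rfl⟩ := hij
      simp [hab_lt.ne', hlt.not_gt, hab_lt.not_gt]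
    by_cases hji : i = b ∧ j = a
    · obtain ⟨rfl, rfl⟩ := hji
      simp [hab_lt, hlt, hab_lt.not_gt]
    simp [swap_lt_swap_iff_of_val_add_one_eq hab hij hji, hji]
  rw [hreindex, hinsert, inversions, card_insert_of_notMem (by simp [hab_lt.not_gt])]

lemma inversions_mul_swap_of_gt {n : ℕ} (π : Perm (Fin n)) {a b : Fin n}
    (hab : (a : ℕ) + 1 = b) (hgt : π b < π a) :
    inversions n π = inversions n (π * swap a b) + 1 := by
  simpa [mul_assoc] using inversions_mul_swap_of_lt (π * swap a b) hab (by simpa using hgt)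

lemma abs_one_sub_le_max_inv_sub_one {r : ℝ} (hr : 0 < r) : |1 - r| ≤ max r r⁻¹ - 1 := by
  have h2 : 2 ≤ r + r⁻¹ := by
    nlinarith [sq_nonneg (r - 1), mul_inv_cancel₀ hr.ne']
  rcases le_total 1 r with h | h
  · rw [abs_of_nonpos (by linarith)]
    linarith [le_max_left r r⁻¹]
  · rw [abs_of_nonneg (by linarith)]
    linarith [le_max_right r r⁻¹]

lemma nat_mul_max_inv_sub_one_le_max_abs {q : ℝ} (hq : 0 < q) (d : ℕ) :
    d * (max q q⁻¹ - 1) ≤ max |1 - q ^ d| |1 - q⁻¹ ^ d| := by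
  have hbernoulli := one_add_mul_sub_le_pow
    (show -1 ≤ max q q⁻¹ by linarith [le_max_left q q⁻¹]) d
  rcases le_total q q⁻¹ with h | h
  · rw [max_eq_right h] at hbernoulli ⊢
    linarith [neg_le_abs (1 - q⁻¹ ^ d), le_max_right |1 - q ^ d| |1 - q⁻¹ ^ d|]
  · rw [max_eq_left h] at hbernoulli ⊢
    linarith [neg_le_abs (1 - q ^ d), le_max_left |1 - q ^ d| |1 - q⁻¹ ^ d|]

variable {n : ℕ} {q : ℝ}

lemma partitionFunction_pos (n : ℕ) (hq : 0 < q) :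
    0 < ∑ σ : Perm (Fin n), q ^ inversions n σ :=
  sum_pos (fun _ _ => pow_pos hq _) univ_nonempty

lemma mallowsPMF_nonneg (hq : 0 < q) (π : Perm (Fin n)) : 0 ≤ mallowsPMF n q π :=
  div_nonneg (pow_nonneg hq.le _) (partitionFunction_pos n hq).le

lemma sum_mallowsPMF (hq : 0 < q) : ∑ π : Perm (Fin n), mallowsPMF n q π = 1 := by
  simp only [mallowsPMF, ← sum_div]
  exact div_self (partitionFunction_pos n hq).ne'

lemma mallowsPMF_mul_swap (hq : q ≠ 0) (π : Perm (Fin n)) {a b : Fin n}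
    (hab : (a : ℕ) + 1 = b) :
    mallowsPMF n q (π * swap a b) = (if π a < π b then q else q⁻¹) * mallowsPMF n q π := by
  have hne : π a ≠ π b := π.injective.ne (Fin.ne_of_lt (Fin.lt_def.2 (by omega)))
  split_ifs with hlt
  · simp only [mallowsPMF, inversions_mul_swap_of_lt π hab hlt, pow_succ]
    ring
  · simp only [mallowsPMF, inversions_mul_swap_of_gt π hab (lt_of_le_of_ne (not_lt.1 hlt) hne.symm),
      pow_succ]
    field_simp

lemma abs_mallowsPMF_sub_mallowsPMF_mul_swap_le (hq : 0 < q) (π : Perm (Fin n)) {a b : Fin n}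
    (hab : (a : ℕ) + 1 = b) :
    |mallowsPMF n q π - mallowsPMF n q (π * swap a b)| ≤ (max q q⁻¹ - 1) * mallowsPMF n q π := by
  have hc : |1 - (if π a < π b then q else q⁻¹)| ≤ max q q⁻¹ - 1 := by
    split_ifs
    · exact abs_one_sub_le_max_inv_sub_one hq
    · simpa [max_comm] using abs_one_sub_le_max_inv_sub_one (inv_pos.2 hq)
  rw [mallowsPMF_mul_swap hq.ne' π hab, ← one_sub_mul, abs_mul,
    abs_of_nonneg (mallowsPMF_nonneg hq π)]
  exact mul_le_mul_of_nonneg_right hc (mallowsPMF_nonneg hq π)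

lemma mallowsExp_comp_mul_swap (f : Perm (Fin n) → ℝ) (a b : Fin n) :
    mallowsExp n q (fun π => f (π * swap a b))
      = ∑ π : Perm (Fin n), mallowsPMF n q (π * swap a b) * f π :=
  Fintype.sum_equiv (Equiv.mulRight (swap a b)) _ _ fun π => by simp

lemma abs_mallowsExp_sub_mallowsExp_comp_mul_swap_le (hq : 0 < q) (f : Perm (Fin n) → ℝ)
    (hf : ∀ π, |f π| ≤ 1) {a b : Fin n} (hab : (a : ℕ) + 1 = b) :
    |mallowsExp n q f - mallowsExp n q (fun π => f (π * swap a b))| ≤ max q q⁻¹ - 1 := by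
  rw [mallowsExp_comp_mul_swap, mallowsExp, ← sum_sub_distrib]
  calc |∑ π, (mallowsPMF n q π * f π - mallowsPMF n q (π * swap a b) * f π)|
      ≤ ∑ π, |mallowsPMF n q π - mallowsPMF n q (π * swap a b)| * |f π| := by
        simp_rw [← sub_mul, ← abs_mul]
        exact abs_sum_le_sum_abs _ _
    _ ≤ ∑ π, (max q q⁻¹ - 1) * mallowsPMF n q π :=
        sum_le_sum fun π _ => (mul_le_of_le_one_right (abs_nonneg _) (hf π)).trans
          (abs_mallowsPMF_sub_mallowsPMF_mul_swap_le hq π hab)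
    _ = max q q⁻¹ - 1 := by rw [← mul_sum, sum_mallowsPMF hq, mul_one]

open Classical in
lemma mallowsProb_eq_mallowsExp (P : Perm (Fin n) → Prop) :
    mallowsProb n q P = mallowsExp n q (fun π => if P π then 1 else 0) := by
  simp only [mallowsProb, mallowsExp, mul_ite, mul_one, mul_zero]

lemma permAct_succ_eq_permAct_mul_swap (π : Perm (Fin n)) {k : ℕ} (hk : 1 ≤ k)
    (hkn : k + 1 ≤ n) :
    permAct n π (k + 1) = permAct n (π * swap ⟨k - 1, by omega⟩ ⟨k, by omega⟩) k := by
  simp [permAct, hk, hkn, show k ≤ n by omega]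

lemma abs_mallowsProb_permAct_sub_succ_le (hq : 0 < q) (P : ℕ → Prop) {k : ℕ}
    (hk : 1 ≤ k) (hkn : k + 1 ≤ n) :
    |mallowsProb n q (fun π => P (permAct n π k))
        - mallowsProb n q (fun π => P (permAct n π (k + 1)))| ≤ max q q⁻¹ - 1 := by
  classical
  simp only [mallowsProb_eq_mallowsExp, permAct_succ_eq_permAct_mul_swap _ hk hkn]
  exact abs_mallowsExp_sub_mallowsExp_comp_mul_swap_le hq _ (fun π => by split_ifs <;> simp)
    (show k - 1 + 1 = k by omega)

lemma abs_mallowsProb_permAct_sub_le (hq : 0 < q) (P : ℕ → Prop) {s t : ℕ}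
    (hs : 1 ≤ s) (hst : s ≤ t) (ht : t ≤ n) :
    |mallowsProb n q (fun π => P (permAct n π s)) - mallowsProb n q (fun π => P (permAct n π t))|
      ≤ (t - s : ℕ) * (max q q⁻¹ - 1) := by
  have := dist_le_Ico_sum_of_dist_le (f := fun k => mallowsProb n q fun π => P (permAct n π k))
    (d := fun _ => max q q⁻¹ - 1) hst
    fun hsk hkt => abs_mallowsProb_permAct_sub_succ_le hq P (hs.trans hsk) (by omega)
  simpa [Real.dist_eq, mul_sub] using this

end

theorem mallows_indicator_expectation_diff_general (n : ℕ) (q : ℝ) (hq : 0 < q)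
    (A : Set ℝ)
    (s t : ℕ) (hs : 1 ≤ s ∧ s ≤ n) (ht : 1 ≤ t ∧ t ≤ n) :
    |mallowsProb n q (fun π => (permAct n π s : ℝ) / n ∈ A)
        - mallowsProb n q (fun π => (permAct n π t : ℝ) / n ∈ A)|
      ≤ max |1 - q ^ (max s t - min s t)| |1 - q⁻¹ ^ (max s t - min s t)| := by
  wlog hst : s ≤ t generalizing s t
  · rw [abs_sub_comm, max_comm s t, min_comm s t]
    exact this t s ht hs (le_of_not_ge hst)
  rw [max_eq_right hst, min_eq_left hst]
  exact (abs_mallowsProb_permAct_sub_le hq (fun m => (m : ℝ) / n ∈ A) hs.1 hst ht.2).trans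
    (nat_mul_max_inv_sub_one_le_max_abs hq _)

/-- **Lemma 5.6.** For any `A ⊆ [0,1]` and `s, t ∈ {1,…,n}`,
`| E_{μ_{n,q}}[1_A(π(s)/n)] − E_{μ_{n,q}}[1_A(π(t)/n)] | ≤ max(|1−q^d|, |1−q^{−d}|)`
where `d = |s − t|`. -/
theorem mallows_indicator_expectation_diff (n : ℕ) (q : ℝ) (hq : 0 < q)
    (A : Set ℝ) (hA : A ⊆ Set.Icc (0 : ℝ) 1)
    (s t : ℕ) (hs : 1 ≤ s ∧ s ≤ n) (ht : 1 ≤ t ∧ t ≤ n) :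
    |mallowsProb n q (fun π => (permAct n π s : ℝ) / n ∈ A)
        - mallowsProb n q (fun π => (permAct n π t : ℝ) / n ∈ A)|
      ≤ max |1 - q ^ (max s t - min s t)| |1 - q⁻¹ ^ (max s t - min s t)| :=
  mallows_indicator_expectation_diff_general n q hq A s t hs ht
end
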